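/- Let G be a group with elements g₁,…,g₅ and integers t_{ijk} (1 ≤ i < j < k ≤ 5) satisfying the listed commutator relations, and assume t₁₂₃·t₃₄₅ = 0. Then for every integer y, the conjugate g₁^{-y} g₂ g₁^{y} equals g₂ · g₃^{r(y)} · g₄^{s(y)} · g₅^{t(y)}, where r(y) = y t₁₂₃, s(y) = y t₁₂₄ + s₂(y) t₁₂₃ t₁₃₄, and t(y) = y t₁₂₅ + s₂(y)(t₁₂₃ t₁₃₅ + t₁₂₄ t₁₄₅) + s₃(y) t₁₂₃ t₁₃₄ t₁₄₅. -/

import Mathlib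

/-!
Conjugation by `g₁` acts on `a := g₃ ^ t₁₂₃`, `b := g₄`, `c := g₅` unitriangularly:
`a ↦ a b^(t₁₂₃ t₁₃₄) c^(t₁₂₃ t₁₃₅)`, `b ↦ b c^t₁₄₅`, `c ↦ c`, while `g₂ ↦ g₂ a b^t₁₂₄ c^t₁₂₅`.
Since `t₁₂₃ t₃₄₅ = 0`, either `a = 1` or `g₃` commutes with `g₄`; either way `a`, `b`, `c`
commute pairwise. Hence `g₁^(-y) g₂ g₁^y` is `g₂` times a monomial `a^y b^β(y) c^γ(y)`, and the
exponents obey first-order recurrences in `y` whose solutions are polynomials in the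
binomial coefficients `y`, `s₂(y)`, `s₃(y)`.
-/

def s2 (x : ℤ) : ℤ := x * (x - 1) / 2

def s3 (x : ℤ) : ℤ := x * (x - 1) * (x - 2) / 6

lemma s2_add_one (n : ℤ) : s2 (n + 1) = s2 n + n := by
  unfold s2
  rw [show (n + 1) * (n + 1 - 1) = n * (n - 1) + n * 2 by ring,
    Int.add_mul_ediv_right _ _ two_ne_zero]

lemma two_mul_s2 (n : ℤ) : 2 * s2 n = n * (n - 1) :=
  Int.mul_ediv_cancel' (Int.even_mul_pred_self n).two_dvd

lemma s3_add_one (n : ℤ) : s3 (n + 1) = s3 n + s2 n := by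
  unfold s3
  rw [show (n + 1) * (n + 1 - 1) * (n + 1 - 2) = n * (n - 1) * (n - 2) + s2 n * 6 by
      linear_combination (-3) * two_mul_s2 n,
    Int.add_mul_ediv_right _ _ (by norm_num)]

section
variable {G : Type*} [Group G]

lemma Commute.of_inv_mul_inv_mul_mul_eq_one {x y : G} (h : x⁻¹ * y⁻¹ * x * y = 1) :
    Commute x y := by
  rw [Commute, SemiconjBy, ← mul_one (y * x), ← h]; group

lemma inv_mul_mul_eq_mul_of_commutator_eq {x g r : G} (h : x⁻¹ * g⁻¹ * x * g = r) :
    g⁻¹ * x * g = x * r := by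
  rw [← h]; group

lemma inv_mul_zpow_mul (g u : G) (n : ℤ) : g⁻¹ * u ^ n * g = (g⁻¹ * u * g) ^ n := by
  simpa using (conj_zpow (a := g⁻¹) (b := u) (i := n)).symm

lemma zpow_neg_mul_mul_zpow_eq_of_inv_mul_mul_eq {g x : G} {F : ℤ → G} (h0 : F 0 = x)
    (hstep : ∀ w, g⁻¹ * F w * g = F (w + 1)) (y : ℤ) : g ^ (-y) * x * g ^ y = F y := by
  induction y using Int.induction_on with
  | zero => simp [h0]
  | succ n ih => rw [← hstep, ← ih]; group
  | pred n ih =>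
    rw [← sub_add_cancel (-(n : ℤ)) 1, ← hstep] at ih
    rw [← mul_inv_cancel_left g (F _), ← mul_inv_cancel_right (g⁻¹ * F _) g, ← ih]; group

variable {a b c : G}

lemma zpow_mul_zpow_mul_zpow_mul (hab : Commute a b) (hac : Commute a c) (hbc : Commute b c)
    (i j k i' j' k' : ℤ) :
    a ^ i * b ^ j * c ^ k * (a ^ i' * b ^ j' * c ^ k')
      = a ^ (i + i') * b ^ (j + j') * c ^ (k + k') := by
  rw [((hac.zpow_zpow i' k).mul_left (hbc.zpow_zpow j' k)).symm.mul_mul_mul_comm,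
    (hab.zpow_zpow i' j).symm.mul_mul_mul_comm, zpow_add, zpow_add, zpow_add]

lemma zpow_mul_zpow_mul_zpow_zpow (hab : Commute a b) (hac : Commute a c) (hbc : Commute b c)
    (i j k n : ℤ) :
    (a ^ i * b ^ j * c ^ k) ^ n = a ^ (i * n) * b ^ (j * n) * c ^ (k * n) := by
  rw [((hac.zpow_zpow i k).mul_left (hbc.zpow_zpow j k)).mul_zpow,
    (hab.zpow_zpow i j).mul_zpow, ← zpow_mul, ← zpow_mul, ← zpow_mul]

lemma zpow_neg_mul_mul_zpow_of_unitriangular {g x : G}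
    (hab : Commute a b) (hac : Commute a c) (hbc : Commute b c) {p q m n k : ℤ}
    (hx : g⁻¹ * x * g = x * a * b ^ p * c ^ q) (ha : g⁻¹ * a * g = a * b ^ m * c ^ n)
    (hb : g⁻¹ * b * g = b * c ^ k) (hc : g⁻¹ * c * g = c) (y : ℤ) :
    g ^ (-y) * x * g ^ y
      = x * a ^ y * b ^ (y * p + s2 y * m) * c ^ (y * q + s2 y * (n + p * k) + s3 y * m * k) := by
  have hmul := zpow_mul_zpow_mul_zpow_mul hab hac hbc
  have hpow := zpow_mul_zpow_mul_zpow_zpow hab hac hbc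
  simp only [mul_assoc x]
  refine zpow_neg_mul_mul_zpow_eq_of_inv_mul_mul_eq
    (F := fun y ↦ x * (a ^ y * b ^ (y * p + s2 y * m)
      * c ^ (y * q + s2 y * (n + p * k) + s3 y * m * k))) (by simp [s2, s3]) (fun w ↦ ?_) y
  have hconj : ∀ i j l : ℤ, g⁻¹ * (x * (a ^ i * b ^ j * c ^ l)) * g
      = g⁻¹ * x * g * ((g⁻¹ * a * g) ^ i * (g⁻¹ * b * g) ^ j * (g⁻¹ * c * g) ^ l) := by
    intro i j l
    simp only [← inv_mul_zpow_mul]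
    group
  rw [hconj, hx, ha, hb, hc]
  calc _ = x * (a ^ (1 : ℤ) * b ^ p * c ^ q * ((a ^ (1 : ℤ) * b ^ m * c ^ n) ^ w
          * (a ^ (0 : ℤ) * b ^ (1 : ℤ) * c ^ k) ^ (w * p + s2 w * m)
          * (a ^ (0 : ℤ) * b ^ (0 : ℤ) * c ^ (1 : ℤ))
            ^ (w * q + s2 w * (n + p * k) + s3 w * m * k))) := by group
    _ = _ := by
      rw [hpow, hpow, hpow, hmul, hmul, hmul, s2_add_one, s3_add_one]
      congr 3 <;> ring_nf

end

theorem g2_conjugate_by_g1_power_general (G : Type*) [Group G] (g1 g2 g3 g4 g5 : G)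
    (t123 t124 t125 t134 t135 t145 t345 : ℤ)
    (h21 : g2⁻¹ * g1⁻¹ * g2 * g1 = g3 ^ t123 * g4 ^ t124 * g5 ^ t125)
    (h31 : g3⁻¹ * g1⁻¹ * g3 * g1 = g4 ^ t134 * g5 ^ t135)
    (h41 : g4⁻¹ * g1⁻¹ * g4 * g1 = g5 ^ t145)
    (h43 : g4⁻¹ * g3⁻¹ * g4 * g3 = g5 ^ t345)
    (h51 : g5⁻¹ * g1⁻¹ * g5 * g1 = 1)
    (h53 : g5⁻¹ * g3⁻¹ * g5 * g3 = 1)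
    (h54 : g5⁻¹ * g4⁻¹ * g5 * g4 = 1)
    (hcons : t123 * t345 = 0) :
    ∀ y : ℤ,
      g1 ^ (-y) * g2 * g1 ^ y
        = g2 * g3 ^ (y * t123) * g4 ^ (y * t124 + s2 y * t123 * t134)
            * g5 ^ (y * t125 + s2 y * (t123 * t135 + t124 * t145)
                    + s3 y * t123 * t134 * t145) := by
  have h35 := (Commute.of_inv_mul_inv_mul_mul_eq_one h53).symm
  have h45 := (Commute.of_inv_mul_inv_mul_mul_eq_one h54).symm
  obtain ⟨h34, hconj3⟩ : Commute (g3 ^ t123) g4 ∧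
      g1⁻¹ * g3 ^ t123 * g1 = g3 ^ t123 * g4 ^ (t134 * t123) * g5 ^ (t135 * t123) := by
    rw [inv_mul_zpow_mul, inv_mul_mul_eq_mul_of_commutator_eq h31]
    rcases mul_eq_zero.mp hcons with h | h
    · simp [h]
    · have h34 := (Commute.of_inv_mul_inv_mul_mul_eq_one (by simpa [h] using h43)).symm
      refine ⟨h34.zpow_left t123, ?_⟩
      simpa [mul_assoc] using zpow_mul_zpow_mul_zpow_zpow h34 h35 h45 1 t134 t135 t123
  intro y
  rw [zpow_neg_mul_mul_zpow_of_unitriangular h34 (h35.zpow_left t123) h45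
    (by simpa [mul_assoc] using inv_mul_mul_eq_mul_of_commutator_eq h21) hconj3
    (inv_mul_mul_eq_mul_of_commutator_eq h41)
    (by simpa using inv_mul_mul_eq_mul_of_commutator_eq h51), ← zpow_mul]
  ring_nf

/-- Conjugation formula `g₂^{g₁^y} = g₂ g₃^{r(y)} g₄^{s(y)} g₅^{t(y)}` with
`r(y) = y t₁₂₃`, `s(y) = y t₁₂₄ + s₂(y) t₁₂₃ t₁₃₄` and
`t(y) = y t₁₂₅ + s₂(y)(t₁₂₃ t₁₃₅ + t₁₂₄ t₁₄₅) + s₃(y) t₁₂₃ t₁₃₄ t₁₄₅`,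
assuming `t₁₂₃ t₃₄₅ = 0`. -/
theorem g2_conjugate_by_g1_power (G : Type*) [Group G] (g1 g2 g3 g4 g5 : G)
    (t123 t124 t125 t134 t135 t145 t234 t235 t245 t345 : ℤ)
    (h21 : g2⁻¹ * g1⁻¹ * g2 * g1 = g3 ^ t123 * g4 ^ t124 * g5 ^ t125)
    (h31 : g3⁻¹ * g1⁻¹ * g3 * g1 = g4 ^ t134 * g5 ^ t135)
    (h32 : g3⁻¹ * g2⁻¹ * g3 * g2 = g4 ^ t234 * g5 ^ t235)
    (h41 : g4⁻¹ * g1⁻¹ * g4 * g1 = g5 ^ t145)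
    (h42 : g4⁻¹ * g2⁻¹ * g4 * g2 = g5 ^ t245)
    (h43 : g4⁻¹ * g3⁻¹ * g4 * g3 = g5 ^ t345)
    (h51 : g5⁻¹ * g1⁻¹ * g5 * g1 = 1)
    (h52 : g5⁻¹ * g2⁻¹ * g5 * g2 = 1)
    (h53 : g5⁻¹ * g3⁻¹ * g5 * g3 = 1)
    (h54 : g5⁻¹ * g4⁻¹ * g5 * g4 = 1)
    (hcons : t123 * t345 = 0) :
    ∀ y : ℤ,
      g1 ^ (-y) * g2 * g1 ^ y
        = g2 * g3 ^ (y * t123) * g4 ^ (y * t124 + s2 y * t123 * t134)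
            * g5 ^ (y * t125 + s2 y * (t123 * t135 + t124 * t145)
                    + s3 y * t123 * t134 * t145) :=
  g2_conjugate_by_g1_power_general G g1 g2 g3 g4 g5 t123 t124 t125 t134 t135 t145 t345 h21 h31 h41
    h43 h51 h53 h54 hcons
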